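/- Define E₁ = {((2k−1)/2ⁿ, (2k−1)/2ⁿ + 1/2^{n+1}) : k = 1,…,2^{n−1}, n ∈ ℕ} ⊆ [0,1]², E₂ = {(x,x) : x ∈ [0,1]}, and E = E₁ ∪ E₂. Then E is a closed subset of [0,1]² and every vertical section E ∩ ({x} × [0,1]) and every horizontal section E ∩ ([0,1] × {y}) contains at most 2 points. -/

import Mathlib

open Set

def E1 : Set (ℝ × ℝ) :=
  {p | ∃ n k : ℕ, 1 ≤ n ∧ 1 ≤ k ∧ k ≤ 2 ^ (n - 1) ∧
    p.1 = (2 * (k : ℝ) - 1) / 2 ^ n ∧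
    p.2 = (2 * (k : ℝ) - 1) / 2 ^ n + 1 / 2 ^ (n + 1)}

def E2 : Set (ℝ × ℝ) := {p | p.1 ∈ Icc (0:ℝ) 1 ∧ p.2 = p.1}

/-!
A dyadic rational with odd numerator has a unique representation `(2k - 1) / 2ⁿ`. Both
coordinates of a point of `E1` have this form (the second one is `(4k - 1) / 2ⁿ⁺¹`), so each
coordinate determines the point, as it does on the diagonal `E2`; hence a vertical or horizontal
line meets each of `E1`, `E2` at most once. For closedness: a point of `E1` at level `n` lies
`1 / 2ⁿ⁺¹` above the diagonal, so only finitely many points of `E1` lie at height `≥ ε` above it,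
and every accumulation point of `E1` is on the diagonal.
-/

lemma Int.eq_of_odd_mul_two_pow_eq {a b : ℤ} {m n : ℕ} (ha : Odd a) (hb : Odd b)
    (h : a * 2 ^ m = b * 2 ^ n) : m = n ∧ a = b := by
  wlog hmn : m ≤ n generalizing a b m n
  · exact (this hb ha h.symm (by omega)).imp Eq.symm Eq.symm
  obtain ⟨d, rfl⟩ := Nat.exists_eq_add_of_le hmn
  have hab : a = b * 2 ^ d :=
    mul_right_cancel₀ (pow_ne_zero m two_ne_zero) (by rw [h]; ring)
  rcases d with _ | d
  · simpa using hab
  · rw [hab, pow_succ, ← mul_assoc] at ha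
    exact absurd (even_two.mul_left _) (Int.not_even_iff_odd.mpr ha)

lemma eq_of_odd_div_two_pow_eq {K : Type*} [Field K] [CharZero K] {a b : ℤ} {m n : ℕ}
    (ha : Odd a) (hb : Odd b) (h : (a : K) / 2 ^ m = b / 2 ^ n) : m = n ∧ a = b := by
  rw [div_eq_div_iff (pow_ne_zero _ two_ne_zero) (pow_ne_zero _ two_ne_zero)] at h
  exact (Int.eq_of_odd_mul_two_pow_eq ha hb (by exact_mod_cast h)).imp_left Eq.symm

lemma Int.odd_two_mul_sub_one (k : ℤ) : Odd (2 * k - 1) := ⟨k - 1, by ring⟩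

lemma two_mul_sub_one_div_two_pow_add_one_div_two_pow_succ (n k : ℕ) :
    (2 * (k : ℝ) - 1) / 2 ^ n + 1 / 2 ^ (n + 1) = ((2 * (2 * k) - 1 : ℤ) : ℝ) / 2 ^ (n + 1) := by
  push_cast
  rw [pow_succ]
  field_simp
  ring

lemma injOn_fst_E1 : InjOn Prod.fst E1 := by
  rintro p ⟨n, k, -, -, -, hp1, hp2⟩ q ⟨n', k', -, -, -, hq1, hq2⟩ h
  have hx : ((2 * k - 1 : ℤ) : ℝ) / 2 ^ n = ((2 * k' - 1 : ℤ) : ℝ) / 2 ^ n' := by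
    push_cast; rw [← hp1, ← hq1, h]
  obtain ⟨rfl, hk⟩ :=
    eq_of_odd_div_two_pow_eq (Int.odd_two_mul_sub_one _) (Int.odd_two_mul_sub_one _) hx
  obtain rfl : k = k' := by omega
  exact Prod.ext h (hp2.trans hq2.symm)

lemma injOn_snd_E1 : InjOn Prod.snd E1 := by
  rintro p ⟨n, k, -, -, -, hp1, hp2⟩ q ⟨n', k', -, -, -, hq1, hq2⟩ h
  rw [two_mul_sub_one_div_two_pow_add_one_div_two_pow_succ] at hp2 hq2
  obtain ⟨hn, hk⟩ := eq_of_odd_div_two_pow_eq (K := ℝ) (Int.odd_two_mul_sub_one _)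
    (Int.odd_two_mul_sub_one _) (hp2 ▸ hq2 ▸ h)
  obtain rfl : n = n' := by omega
  obtain rfl : k = k' := by omega
  exact Prod.ext (hp1.trans hq1.symm) h

lemma injOn_fst_E2 : InjOn Prod.fst E2 := fun p hp q hq h =>
  Prod.ext h (by rw [hp.2, hq.2, h])

lemma injOn_snd_E2 : InjOn Prod.snd E2 := fun p hp q hq h =>
  Prod.ext (by rw [← hp.2, ← hq.2, h]) h

lemma Set.InjOn.eq_or_eq_or_eq_of_mem_union {α β : Type*} {f : α → β} {s t : Set α}
    (hs : InjOn f s) (ht : InjOn f t) {a b c : α} (ha : a ∈ s ∪ t) (hb : b ∈ s ∪ t)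
    (hc : c ∈ s ∪ t) (hab : f a = f b) (hac : f a = f c) : a = b ∨ a = c ∨ b = c := by
  have hbc : f b = f c := hab.symm.trans hac
  rcases ha with ha | ha <;> rcases hb with hb | hb <;> rcases hc with hc | hc <;>
    first
    | exact Or.inl (hs ha hb hab) | exact Or.inl (ht ha hb hab)
    | exact Or.inr (Or.inl (hs ha hc hac)) | exact Or.inr (Or.inl (ht ha hc hac))
    | exact Or.inr (Or.inr (hs hb hc hbc)) | exact Or.inr (Or.inr (ht hb hc hbc))

lemma closure_subset_union_of_finite_inter {X : Type*} [TopologicalSpace X] [T1Space X]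
    {s : Set X} {f : X → ℝ} (hf : Continuous f)
    (hfin : ∀ ε > 0, (s ∩ {x | ε ≤ f x}).Finite) : closure s ⊆ s ∪ {x | f x ≤ 0} := by
  intro p hp
  rcases le_or_gt (f p) 0 with hp0 | hp0
  · exact Or.inr hp0
  have hsplit : s ⊆ (s ∩ {x | f p / 2 ≤ f x}) ∪ {x | f x ≤ f p / 2} := fun x hx =>
    (le_total (f p / 2) (f x)).imp (fun h => ⟨hx, h⟩) id
  have hclosed : IsClosed ((s ∩ {x | f p / 2 ≤ f x}) ∪ {x | f x ≤ f p / 2}) :=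
    (hfin _ (half_pos hp0)).isClosed.union (isClosed_le hf continuous_const)
  rcases closure_minimal hsplit hclosed hp with hp' | (hp' : f p ≤ f p / 2)
  · exact Or.inl hp'.1
  · linarith

lemma E1_subset_Icc_prod_Icc_inter_fst_le_snd : E1 ⊆ Icc 0 1 ×ˢ Icc 0 1 ∩ {p | p.1 ≤ p.2} := by
  rintro p ⟨n, k, hn, hk, hkn, hp1, hp2⟩
  have hk1 : (1 : ℝ) ≤ k := by exact_mod_cast hk
  have hkn' : 4 * (k : ℝ) ≤ 2 ^ (n + 1) := by
    have : 4 * k ≤ 2 ^ (n + 1) := by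
      calc 4 * k ≤ 4 * 2 ^ (n - 1) := by omega
        _ = 2 ^ (n + 1) := by rw [show n + 1 = n - 1 + 2 by omega, pow_add]; ring
    exact_mod_cast this
  have hx0 : 0 ≤ p.1 := hp1 ▸ div_nonneg (by linarith) (by positivity)
  have hxy : p.1 ≤ p.2 := by rw [hp2, ← hp1]; exact le_add_of_nonneg_right (by positivity)
  have hy1 : p.2 ≤ 1 := by
    rw [hp2, two_mul_sub_one_div_two_pow_add_one_div_two_pow_succ, div_le_one (by positivity)]
    push_cast
    linarith
  exact ⟨⟨⟨hx0, hxy.trans hy1⟩, ⟨hx0.trans hxy, hy1⟩⟩, hxy⟩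

lemma finite_E1_inter (ε : ℝ) (hε : 0 < ε) : (E1 ∩ {p | ε ≤ p.2 - p.1}).Finite := by
  obtain ⟨N, hN⟩ := exists_pow_lt_of_lt_one hε (by norm_num : (1 / 2 : ℝ) < 1)
  let g : ℕ × ℕ → ℝ × ℝ := fun nk =>
    ((2 * (nk.2 : ℝ) - 1) / 2 ^ nk.1, (2 * (nk.2 : ℝ) - 1) / 2 ^ nk.1 + 1 / 2 ^ (nk.1 + 1))
  refine (((finite_Iio N).prod (finite_Iic (2 ^ N))).image g).subset ?_
  rintro p ⟨⟨n, k, -, -, hkn, hp1, hp2⟩, hp : ε ≤ p.2 - p.1⟩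
  have hnN : n < N := by
    have : (1 / 2 : ℝ) ^ N < (1 / 2) ^ (n + 1) := by
      rw [hp1, hp2, add_sub_cancel_left, ← one_div_pow] at hp
      linarith
    have := (pow_lt_pow_iff_right_of_lt_one₀ (by norm_num) (by norm_num)).mp this
    omega
  refine ⟨(n, k), ⟨hnN, hkn.trans (Nat.pow_le_pow_right two_pos (by omega))⟩, ?_⟩
  exact Prod.ext hp1.symm hp2.symm

lemma closure_E1_subset : closure E1 ⊆ E1 ∪ E2 := by
  intro p hp
  have hclosed : IsClosed (Icc (0 : ℝ) 1 ×ˢ Icc (0 : ℝ) 1 ∩ {p : ℝ × ℝ | p.1 ≤ p.2}) :=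
    (isClosed_Icc.prod isClosed_Icc).inter (isClosed_le continuous_fst continuous_snd)
  obtain ⟨⟨hx, -⟩, hxy⟩ := closure_minimal E1_subset_Icc_prod_Icc_inter_fst_le_snd hclosed hp
  rcases closure_subset_union_of_finite_inter (continuous_snd.sub continuous_fst)
    finite_E1_inter hp with hE1 | hyx
  · exact Or.inl hE1
  · exact Or.inr ⟨hx, le_antisymm (sub_nonpos.mp hyx) hxy⟩

lemma isClosed_E2 : IsClosed E2 :=
  (isClosed_Icc.preimage continuous_fst).inter (isClosed_eq continuous_snd continuous_fst)

theorem stmt15 :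
    (E1 ∪ E2) ⊆ (Icc (0:ℝ) 1) ×ˢ (Icc (0:ℝ) 1) ∧
    IsClosed (E1 ∪ E2) ∧
    (∀ x : ℝ, ∀ y₁ y₂ y₃ : ℝ, (x, y₁) ∈ E1 ∪ E2 → (x, y₂) ∈ E1 ∪ E2 →
      (x, y₃) ∈ E1 ∪ E2 → y₁ = y₂ ∨ y₁ = y₃ ∨ y₂ = y₃) ∧
    (∀ y : ℝ, ∀ x₁ x₂ x₃ : ℝ, (x₁, y) ∈ E1 ∪ E2 → (x₂, y) ∈ E1 ∪ E2 →
      (x₃, y) ∈ E1 ∪ E2 → x₁ = x₂ ∨ x₁ = x₃ ∨ x₂ = x₃) := by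
  refine ⟨?_, ?_, ?_, ?_⟩
  · exact union_subset (fun p hp => (E1_subset_Icc_prod_Icc_inter_fst_le_snd hp).1)
      fun p ⟨hx, hy⟩ => ⟨hx, hy ▸ hx⟩
  · refine isClosed_of_closure_subset ?_
    rw [closure_union, isClosed_E2.closure_eq]
    exact union_subset closure_E1_subset subset_union_right
  · intro x y₁ y₂ y₃ h₁ h₂ h₃
    simpa using injOn_fst_E1.eq_or_eq_or_eq_of_mem_union injOn_fst_E2 h₁ h₂ h₃ rfl rfl
  · intro y x₁ x₂ x₃ h₁ h₂ h₃
    simpa using injOn_snd_E1.eq_or_eq_or_eq_of_mem_union injOn_snd_E2 h₁ h₂ h₃ rfl rfl
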